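/- Let N ≥ 1, let α_1,…,α_N, β_1,…,β_N be complex numbers with |α_r| < 1 and 0 < |β_r| < 1 for all r, the β_r pairwise distinct, and let 0 = k_1 < k_2 < … < k_N and l_1 < l_2 < … < l_N be integers with l_N ≤ N−1. For 1 ≤ i, j ≤ N define G̃_{i,j} = (1/2πi)∮_{|z|=1} h_{k_1,…,k_N}(β; β_i↦z) · h_{l_1,…,l_N}(1/β; 1/β_j↦1/z) · ∏_{r=1}^N (1−α_r z)^{−1}(1−β_r/z)^{−1} · z^{−1} dz. Then G̃_{i,j} = 0 whenever i ≠ j, and G̃_{j,j} = h_{k_1,…,k_N}(β) · h_{l_1,…,l_N}(1/β) / [∏_{r=1}^N(1−α_r β_j) · ∏_{s=1, s≠j}^N (1−β_s/β_j)]. -/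

import Mathlib

/-- The alternating determinant `h_{κ(1),…,κ(N)}(β) = det(β_j^{κ_i})_{i,j=1}^N`, where the
sequences `κ` (integer exponents) and `β` are 1-indexed. -/
noncomputable def hdet (N : ℕ) (κ : ℕ → ℤ) (β : ℕ → ℂ) : ℂ :=
  Matrix.det (Matrix.of fun i j : Fin N => β ((j : ℕ) + 1) ^ κ ((i : ℕ) + 1))

/-- The determinant `h_{κ(1),…,κ(N)}(β; β_{j₀} ↦ z)`: the matrix `(β_j^{κ_i})` with the
`j₀`-th column replaced by `(z^{κ_i})_i`. -/
noncomputable def hdetSub (N : ℕ) (κ : ℕ → ℤ) (β : ℕ → ℂ) (j₀ : ℕ) (z : ℂ) : ℂ :=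
  Matrix.det (Matrix.of fun i j : Fin N =>
    if (j : ℕ) + 1 = j₀ then z ^ κ ((i : ℕ) + 1) else β ((j : ℕ) + 1) ^ κ ((i : ℕ) + 1))

/-- The Gramm matrix entry `G̃_{i,j}` of equation (3.12) of the paper. -/
noncomputable def Gtilde (N : ℕ) (κ lam : ℕ → ℤ) (α β : ℕ → ℂ) (i j : ℕ) : ℂ :=
  (1 / (2 * (Real.pi : ℂ) * Complex.I)) *
    ∮ z in C(0, 1),
      hdetSub N κ β i z * hdetSub N lam (fun t => (β t)⁻¹) j z⁻¹ *
        (∏ t ∈ Finset.Icc 1 N, ((1 - α t * z)⁻¹ * (1 - β t / z)⁻¹)) * z⁻¹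

/-! On the unit circle `(1 - β_t / z)⁻¹ = z (z - β_t)⁻¹`, so the integrand of `G̃_{i,j}` is
`g z * ∏_t (z - β_t)⁻¹` with
`g z = h_k(β; β_i ↦ z) · z^(N-1) h_l(1/β; 1/β_j ↦ 1/z) · ∏_r (1 - α_r z)⁻¹`,
which is holomorphic on the closed unit disc because `k_i ≥ 0` and `l_i ≤ N - 1`. Partial
fractions and the Cauchy integral formula turn the integral into the sum of the residues at the
poles `β_t`. By the repeated-column argument the first determinant vanishes at `β_t` unless
`t = i`, and the second unless `t = j`, so only the term `t = i = j` survives. -/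

open Real Complex Metric Finset Lagrange

theorem prod_inv_sub_eq_sum_nodalWeight_mul {ι F : Type*} [DecidableEq ι] [Field F]
    {s : Finset ι} {v : ι → F} {x : F} (hvs : Set.InjOn v s) (hs : s.Nonempty)
    (hx : ∀ i ∈ s, x ≠ v i) :
    ∏ i ∈ s, (x - v i)⁻¹ = ∑ i ∈ s, nodalWeight s v i * (x - v i)⁻¹ := by
  have h := eval_interpolate_not_at_node 1 hx
  simp only [interpolate_one hvs hs, Polynomial.eval_one, eval_nodal, Pi.one_apply,
    mul_one] at h
  rw [prod_inv_distrib]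
  exact (eq_inv_of_mul_eq_one_right h.symm).symm

theorem circleIntegral_mul_prod_inv_sub {c : ℂ} {R : ℝ} {g : ℂ → ℂ}
    (hg : DiffContOnCl ℂ g (ball c R)) {ι : Type*} [DecidableEq ι] {s : Finset ι} {b : ι → ℂ}
    (hb : Set.InjOn b s) (hs : s.Nonempty) (hbR : ∀ t ∈ s, b t ∈ ball c R) :
    (∮ z in C(c, R), g z * ∏ t ∈ s, (z - b t)⁻¹) =
      2 * π * I * ∑ t ∈ s, nodalWeight s b t * g (b t) := by
  obtain ⟨t₀, ht₀⟩ := hs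
  have hR : 0 ≤ R := (pos_of_mem_ball (hbR t₀ ht₀)).le
  have hne : ∀ z ∈ sphere c R, ∀ t ∈ s, z ≠ b t := fun z hz t ht =>
    sphere_disjoint_ball.ne_of_mem hz (hbR t ht)
  have hint : ∀ t ∈ s,
      CircleIntegrable (fun z => nodalWeight s b t • ((z - b t)⁻¹ • g z)) c R := fun t ht =>
    (continuousOn_const.fun_smul (((continuousOn_id.sub continuousOn_const).inv₀ fun z hz =>
      sub_ne_zero.2 (hne z hz t ht)).fun_smul
        (hg.continuousOn_ball.mono sphere_subset_closedBall))).circleIntegrable hR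
  calc (∮ z in C(c, R), g z * ∏ t ∈ s, (z - b t)⁻¹)
      = ∮ z in C(c, R), ∑ t ∈ s, nodalWeight s b t • ((z - b t)⁻¹ • g z) := by
        refine circleIntegral.integral_congr hR fun z hz => ?_
        simp only [prod_inv_sub_eq_sum_nodalWeight_mul hb ⟨t₀, ht₀⟩ (hne z hz), mul_sum,
          smul_eq_mul]
        exact sum_congr rfl fun t _ => by ring
    _ = ∑ t ∈ s, nodalWeight s b t • ((2 * π * I : ℂ) • g (b t)) := by
        rw [circleIntegral.integral_fun_sum hint]
        exact sum_congr rfl fun t ht => by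
          rw [circleIntegral.integral_smul, hg.circleIntegral_sub_inv_smul (hbR t ht)]
    _ = 2 * π * I * ∑ t ∈ s, nodalWeight s b t * g (b t) := by
        simp only [mul_sum, smul_eq_mul]
        exact sum_congr rfl fun t _ => by ring

theorem Differentiable.det {𝕜 E n : Type*} [NontriviallyNormedField 𝕜] [NormedAddCommGroup E]
    [NormedSpace 𝕜 E] [Fintype n] [DecidableEq n] {A : E → Matrix n n 𝕜}
    (hA : ∀ i j, Differentiable 𝕜 fun x => A x i j) : Differentiable 𝕜 fun x => (A x).det := by
  simp only [Matrix.det_apply, Units.smul_def, zsmul_eq_mul]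
  fun_prop

theorem differentiable_det_updateCol_zpow {n : Type*} [Fintype n] [DecidableEq n]
    (A : Matrix n n ℂ) (j : n) {m : n → ℤ} (hm : ∀ i, 0 ≤ m i) :
    Differentiable ℂ fun z => (A.updateCol j fun i => z ^ m i).det := by
  refine Differentiable.det fun i k => ?_
  simp only [Matrix.updateCol_apply]
  split_ifs
  · exact fun z => differentiableAt_zpow.2 (Or.inr (hm i))
  · exact differentiable_const _

theorem differentiableOn_prod_inv_one_sub_mul {ι : Type*} {s : Finset ι} {α : ι → ℂ}
    (hα : ∀ r ∈ s, ‖α r‖ < 1) :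
    DifferentiableOn ℂ (fun z => ∏ r ∈ s, (1 - α r * z)⁻¹) (closedBall 0 1) := by
  refine DifferentiableOn.fun_finsetProd fun r hr =>
    ((differentiableOn_const 1).sub (differentiable_id.const_mul _).differentiableOn).inv
      fun z hz h => ?_
  have : ‖α r * z‖ < 1 := by
    rw [norm_mul]
    exact mul_lt_one_of_nonneg_of_lt_one_left (norm_nonneg _) (hα r hr)
      (mem_closedBall_zero_iff.1 hz)
  rw [← sub_eq_zero.1 h, norm_one] at this
  exact this.false

theorem inv_one_sub_div {K : Type*} [Field K] {x b : K} (hx : x ≠ 0) :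
    (1 - b / x)⁻¹ = x * (x - b)⁻¹ := by
  rw [one_sub_div hx, inv_div, div_eq_mul_inv]

theorem prod_inv_one_sub_div {ι K : Type*} [Field K] (s : Finset ι) (v : ι → K) {x : K}
    (hx : x ≠ 0) :
    ∏ i ∈ s, (1 - v i / x)⁻¹ = x ^ #s * ∏ i ∈ s, (x - v i)⁻¹ := by
  simp only [inv_one_sub_div hx, prod_mul_distrib, prod_const]

noncomputable def powMatrix (N : ℕ) (κ : ℕ → ℤ) (β : ℕ → ℂ) :
    Matrix (Fin N) (Fin N) ℂ :=
  Matrix.of fun i j : Fin N => β ((j : ℕ) + 1) ^ κ ((i : ℕ) + 1)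

section ColumnReplacement

variable {N : ℕ} {κ : ℕ → ℤ} {β : ℕ → ℂ}

theorem hdetSub_self (j : ℕ) : hdetSub N κ β j (β j) = hdet N κ β := by
  unfold hdetSub hdet
  congr 1
  ext k l
  simp only [Matrix.of_apply]
  split_ifs with h
  · rw [h]
  · rfl

theorem hdetSub_eq_zero_of_ne {t j : ℕ} (ht : t ∈ Icc 1 N) (hj : j ∈ Icc 1 N) (htj : t ≠ j) :
    hdetSub N κ β j (β t) = 0 := by
  rw [mem_Icc] at ht hj
  refine Matrix.det_zero_of_column_eq (i := ⟨t - 1, by omega⟩) (j := ⟨j - 1, by omega⟩)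
    (by simp only [ne_eq, Fin.mk.injEq]; omega) fun k => ?_
  simp only [Matrix.of_apply]
  rw [if_neg (by omega), if_pos (by omega), Nat.sub_add_cancel ht.1]

theorem hdetSub_eq_det_updateCol (j : Fin N) (z : ℂ) :
    hdetSub N κ β (j + 1) z =
      ((powMatrix N κ β).updateCol j fun i => z ^ κ ((i : ℕ) + 1)).det := by
  unfold hdetSub
  congr 1
  ext i k
  simp only [powMatrix, Matrix.of_apply, Matrix.updateCol_apply, add_left_inj, Fin.val_inj]

theorem pow_mul_hdetSub_inv (j : Fin N) {z : ℂ} (hz : z ≠ 0) :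
    z ^ (N - 1) * hdetSub N κ β (j + 1) z⁻¹ =
      ((powMatrix N κ β).updateCol j fun i => z ^ ((N : ℤ) - 1 - κ ((i : ℕ) + 1))).det := by
  rw [hdetSub_eq_det_updateCol, ← Matrix.det_updateCol_smul]
  congr 2
  ext i
  rw [Pi.smul_apply, smul_eq_mul, inv_zpow', ← zpow_natCast, ← zpow_add₀ hz]
  have := j.isLt
  congr 1
  omega

end ColumnReplacement

theorem Gtilde_eq_sum {N : ℕ} {α β : ℕ → ℂ} {κ lam : ℕ → ℤ}
    (hα : ∀ t, 1 ≤ t → t ≤ N → ‖α t‖ < 1)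
    (hβ : ∀ t, 1 ≤ t → t ≤ N → 0 < ‖β t‖ ∧ ‖β t‖ < 1)
    (hdist : ∀ s t, 1 ≤ s → s ≤ N → 1 ≤ t → t ≤ N → s ≠ t → β s ≠ β t)
    (hκ : ∀ k : Fin N, 0 ≤ κ (k + 1)) (hlam : ∀ k : Fin N, lam (k + 1) ≤ N - 1) (i j : Fin N) :
    Gtilde N κ lam α β (i + 1) (j + 1) = ∑ t ∈ Icc 1 N,
      hdetSub N κ β (i + 1) (β t) * hdetSub N lam (fun r => (β r)⁻¹) (j + 1) (β t)⁻¹ *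
        (∏ r ∈ Icc 1 N, (1 - α r * β t)⁻¹) * ∏ s ∈ (Icc 1 N).erase t, (1 - β s / β t)⁻¹ := by
  set P := fun z : ℂ => ((powMatrix N κ β).updateCol i fun k => z ^ κ ((k : ℕ) + 1)).det
  set Q := fun z : ℂ => ((powMatrix N lam fun r => (β r)⁻¹).updateCol j
    fun k => z ^ ((N : ℤ) - 1 - lam ((k : ℕ) + 1))).det
  set g := fun z => P z * Q z * ∏ r ∈ Icc 1 N, (1 - α r * z)⁻¹
  have hg : DiffContOnCl ℂ g (ball 0 1) := by
    refine DifferentiableOn.diffContOnCl ?_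
    rw [closure_ball 0 one_ne_zero]
    exact (((differentiable_det_updateCol_zpow _ i hκ).mul
      (differentiable_det_updateCol_zpow _ j fun k => by linarith [hlam k])).differentiableOn).mul
      (differentiableOn_prod_inv_one_sub_mul fun r hr => hα r (mem_Icc.1 hr).1 (mem_Icc.1 hr).2)
  have hg_eq : ∀ z ≠ 0, g z = hdetSub N κ β (i + 1) z *
      (z ^ (N - 1) * hdetSub N lam (fun r => (β r)⁻¹) (j + 1) z⁻¹) *
        ∏ r ∈ Icc 1 N, (1 - α r * z)⁻¹ := fun z hz => by
    rw [hdetSub_eq_det_updateCol, pow_mul_hdetSub_inv j hz]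
  have hN : N ≠ 0 := i.pos.ne'
  have hβ0 : ∀ t ∈ Icc 1 N, β t ≠ 0 := fun t ht =>
    norm_pos_iff.1 (hβ t (mem_Icc.1 ht).1 (mem_Icc.1 ht).2).1
  have hβ_ball : ∀ t ∈ Icc 1 N, β t ∈ ball (0 : ℂ) 1 := fun t ht =>
    mem_ball_zero_iff.2 (hβ t (mem_Icc.1 ht).1 (mem_Icc.1 ht).2).2
  have hinj : Set.InjOn β (Icc 1 N) := fun s hs t ht hst => by
    rw [coe_Icc, Set.mem_Icc] at hs ht
    by_contra h
    exact hdist s t hs.1 hs.2 ht.1 ht.2 h hst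
  have h_integrand : Set.EqOn
      (fun z => hdetSub N κ β (i + 1) z * hdetSub N lam (fun t => (β t)⁻¹) (j + 1) z⁻¹ *
        (∏ t ∈ Icc 1 N, ((1 - α t * z)⁻¹ * (1 - β t / z)⁻¹)) * z⁻¹)
      (fun z => g z * ∏ t ∈ Icc 1 N, (z - β t)⁻¹) (sphere 0 1) := by
    intro z hz
    have hz0 : z ≠ 0 := by rintro rfl; simp at hz
    dsimp only
    rw [hg_eq z hz0, prod_mul_distrib, prod_inv_one_sub_div _ _ hz0, Nat.card_Icc,
      add_tsub_cancel_right, ← pow_sub_one_mul hN z]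
    field_simp
  rw [Gtilde, circleIntegral.integral_congr zero_le_one h_integrand,
    circleIntegral_mul_prod_inv_sub hg hinj ⟨1, by simp; omega⟩ hβ_ball, one_div, ← mul_assoc,
    inv_mul_cancel₀ two_pi_I_ne_zero, one_mul]
  refine sum_congr rfl fun t ht => ?_
  rw [hg_eq _ (hβ0 t ht), prod_inv_one_sub_div _ _ (hβ0 t ht), card_erase_of_mem ht,
    Nat.card_Icc, add_tsub_cancel_right, nodalWeight]
  ring

theorem gramm_matrix_diagonal_general (N : ℕ) (α β : ℕ → ℂ)
    (hα : ∀ i, 1 ≤ i → i ≤ N → ‖α i‖ < 1)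
    (hβ : ∀ i, 1 ≤ i → i ≤ N → 0 < ‖β i‖ ∧ ‖β i‖ < 1)
    (hdist : ∀ i j, 1 ≤ i → i ≤ N → 1 ≤ j → j ≤ N → i ≠ j → β i ≠ β j)
    (κ lam : ℕ → ℤ) (hκ0 : κ 1 = 0)
    (hκ : ∀ i j, 1 ≤ i → i < j → j ≤ N → κ i < κ j)
    (hlam : ∀ i j, 1 ≤ i → i < j → j ≤ N → lam i < lam j)
    (hlamN : lam N ≤ (N : ℤ) - 1) :
    ∀ i j, 1 ≤ i → i ≤ N → 1 ≤ j → j ≤ N →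
      (i ≠ j → Gtilde N κ lam α β i j = 0) ∧
      Gtilde N κ lam α β j j =
        hdet N κ β * hdet N lam (fun t => (β t)⁻¹) /
          ((∏ t ∈ Finset.Icc 1 N, (1 - α t * β j)) *
            ∏ s ∈ (Finset.Icc 1 N).erase j, (1 - β s / β j)) := by
  intro i j h1i hiN h1j hjN
  have hi : i ∈ Icc 1 N := mem_Icc.2 ⟨h1i, hiN⟩
  have hj : j ∈ Icc 1 N := mem_Icc.2 ⟨h1j, hjN⟩
  have hκ_nonneg (k : Fin N) : 0 ≤ κ (k + 1) := by
    rcases Nat.eq_zero_or_pos k with hk | hk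
    · rw [hk, zero_add, hκ0]
    · exact hκ0 ▸ (hκ 1 _ le_rfl (by omega) (by omega)).le
  have hlam_le (k : Fin N) : lam (k + 1) ≤ N - 1 := by
    rcases Nat.lt_or_ge (k + 1) N with hk | hk
    · exact ((hlam _ N (by omega) hk le_rfl).trans_le hlamN).le
    · rwa [show (k : ℕ) + 1 = N by omega]
  obtain ⟨i, rfl⟩ : ∃ k : Fin N, i = k + 1 := ⟨⟨i - 1, by omega⟩, by simp; omega⟩
  obtain ⟨j, rfl⟩ : ∃ k : Fin N, j = k + 1 := ⟨⟨j - 1, by omega⟩, by simp; omega⟩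
  have hG := Gtilde_eq_sum hα hβ hdist hκ_nonneg hlam_le
  refine ⟨fun hij => hG i j ▸ sum_eq_zero fun t ht => ?_, ?_⟩
  · rcases eq_or_ne t (i + 1) with rfl | hti
    · rw [hdetSub_eq_zero_of_ne (β := fun r => (β r)⁻¹) ht hj hij]
      ring
    · rw [hdetSub_eq_zero_of_ne ht hi hti]
      ring
  · rw [hG, sum_eq_single_of_mem _ hj fun t ht htj => by
        rw [hdetSub_eq_zero_of_ne ht hj htj]; ring,
      hdetSub_self, hdetSub_self (β := fun r => (β r)⁻¹), div_eq_mul_inv, mul_inv,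
      prod_inv_distrib, prod_inv_distrib, mul_assoc]

/-- the Gramm matrix `G̃` is diagonal, with the indicated diagonal entries
(equation (3.13) of the paper). -/
theorem gramm_matrix_diagonal (N : ℕ) (hN : 1 ≤ N) (α β : ℕ → ℂ)
    (hα : ∀ i, 1 ≤ i → i ≤ N → ‖α i‖ < 1)
    (hβ : ∀ i, 1 ≤ i → i ≤ N → 0 < ‖β i‖ ∧ ‖β i‖ < 1)
    (hdist : ∀ i j, 1 ≤ i → i ≤ N → 1 ≤ j → j ≤ N → i ≠ j → β i ≠ β j)
    (κ lam : ℕ → ℤ) (hκ0 : κ 1 = 0)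
    (hκ : ∀ i j, 1 ≤ i → i < j → j ≤ N → κ i < κ j)
    (hlam : ∀ i j, 1 ≤ i → i < j → j ≤ N → lam i < lam j)
    (hlamN : lam N ≤ (N : ℤ) - 1) :
    ∀ i j, 1 ≤ i → i ≤ N → 1 ≤ j → j ≤ N →
      (i ≠ j → Gtilde N κ lam α β i j = 0) ∧
      Gtilde N κ lam α β j j =
        hdet N κ β * hdet N lam (fun t => (β t)⁻¹) /
          ((∏ t ∈ Finset.Icc 1 N, (1 - α t * β j)) *
            ∏ s ∈ (Finset.Icc 1 N).erase j, (1 - β s / β j)) :=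
  gramm_matrix_diagonal_general N α β hα hβ hdist κ lam hκ0 hκ hlam hlamN
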